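/- arXiv:2407.06623 — 2 statements merged into one kernel-verified Lean document; each statement's English description precedes it below -/
import Mathlib

section
/- Greedy anchor assignment is optimal for interval covering: given a user whose sequence of time slots 1..T is covered by clusters, where each cluster c is visible to the user on a set of slots, and the objective is to maximize the number of consecutive slot pairs (k−1, k) assigned to the same cluster (equivalently, minimize the number of cluster switches), the greedy strategy that keeps the current cluster while it remains visible and, upon a forced switch, picks the cluster that will remain visible for the longest time, achieves the minimum possible number of switches. -/
/-- Number of cluster switches of an assignment `a` over slots `1..T`:
    the number of consecutive slot pairs `(k-1, k)` assigned to different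
    clusters (equivalently, `T - 1` minus the number of pairs assigned to the
    same cluster). -/
def Switches (T : ℕ) (a : ℕ → ℕ) : ℕ :=
  ((Finset.Icc 2 T).filter (fun k => a k ≠ a (k - 1))).card

/-!
Let `s < k` be consecutive segment starts of the greedy assignment `g` (a segment starts at
slot `1` and at every switch of `g`). At `s` the greedy choice `g s` stays visible at least as
long as any cluster visible from `s` on, and since `g` is forced to leave it at `k`, no cluster
is visible on all of `[s, k]`. Hence every valid assignment switches somewhere in `(s, k]`, and
these intervals are disjoint for different switches `k` of `g`.
-/

open Finset

lemma eq_of_forall_mem_Ioc_eq_pred {α : Type*} {f : ℕ → α} {i k : ℕ}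
    (h : ∀ j ∈ Ioc i k, f j = f (j - 1)) : ∀ j ∈ Icc i k, f j = f i := by
  intro j hj
  obtain ⟨hij, hjk⟩ := mem_Icc.mp hj
  clear hj
  induction j, hij using Nat.le_induction with
  | base => rfl
  | succ n hin ih =>
    rw [h (n + 1) (mem_Ioc.mpr ⟨by omega, hjk⟩), Nat.add_sub_cancel, ih (by omega)]

/-- The chosen witnesses are strictly increasing along `S`, hence distinct. -/
lemma card_le_card_of_forall_exists_mem_Ioc {S A : Finset ℕ} (p : ℕ → ℕ)
    (hp : ∀ k ∈ S, ∀ k' ∈ S, k < k' → k ≤ p k')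
    (h : ∀ k ∈ S, ∃ j ∈ A, p k < j ∧ j ≤ k) : #S ≤ #A := by
  choose! f hfA hf using h
  have hmono : StrictMonoOn f S := fun k hk k' hk' hlt => by
    have := hp k hk k' hk' hlt
    have := hf k hk
    have := hf k' hk'
    omega
  exact card_le_card_of_injOn f hfA hmono.injOn

def lastSegmentStart (g : ℕ → ℕ) (k : ℕ) : ℕ :=
  Nat.findGreatest (fun j => j = 1 ∨ g j ≠ g (j - 1)) (k - 1)

section lastSegmentStart

variable {g : ℕ → ℕ} {k : ℕ}

lemma le_lastSegmentStart {j : ℕ} (hjk : j < k) (hj : g j ≠ g (j - 1)) :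
    j ≤ lastSegmentStart g k :=
  Nat.le_findGreatest (by omega) (Or.inr hj)

lemma one_le_lastSegmentStart (hk : 2 ≤ k) : 1 ≤ lastSegmentStart g k :=
  Nat.le_findGreatest (by omega) (Or.inl rfl)

lemma lastSegmentStart_lt (hk : 2 ≤ k) : lastSegmentStart g k < k :=
  (Nat.findGreatest_le _).trans_lt (by omega)

lemma lastSegmentStart_eq_one_or_ne_pred (hk : 2 ≤ k) :
    lastSegmentStart g k = 1 ∨ g (lastSegmentStart g k) ≠ g (lastSegmentStart g k - 1) :=
  Nat.findGreatest_of_ne_zero rfl (Nat.one_le_iff_ne_zero.mp (one_le_lastSegmentStart hk))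

lemma apply_pred_eq_apply_lastSegmentStart (hk : 2 ≤ k) :
    g (k - 1) = g (lastSegmentStart g k) := by
  have hlt := lastSegmentStart_lt (g := g) hk
  refine eq_of_forall_mem_Ioc_eq_pred (fun j hj => ?_) (k - 1) (mem_Icc.mpr ⟨by omega, le_rfl⟩)
  obtain ⟨hsj, hjk⟩ := mem_Ioc.mp hj
  by_contra hne
  exact hsj.not_ge (le_lastSegmentStart (by omega) hne)

end lastSegmentStart

lemma exists_switch_mem_Ioc_lastSegmentStart {T : ℕ} {vis : ℕ → Finset ℕ} {g a : ℕ → ℕ}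
    (hkeep : ∀ k ∈ Icc 2 T, k ∈ vis (g (k - 1)) → g k = g (k - 1))
    (hlongest : ∀ k ∈ Icc 1 T, (k = 1 ∨ g k ≠ g (k - 1)) →
      ∀ c k', k ≤ k' → (∀ t ∈ Icc k k', t ∈ vis c) → ∀ t ∈ Icc k k', t ∈ vis (g k))
    (havalid : ∀ k ∈ Icc 1 T, k ∈ vis (a k))
    {k : ℕ} (hk : k ∈ Icc 2 T) (hgk : g k ≠ g (k - 1)) :
    ∃ j ∈ (Icc 2 T).filter (fun j => a j ≠ a (j - 1)), lastSegmentStart g k < j ∧ j ≤ k := by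
  obtain ⟨hk2, hkT⟩ := mem_Icc.mp hk
  set s := lastSegmentStart g k
  have hs1 : 1 ≤ s := one_le_lastSegmentStart hk2
  have hsk : s < k := lastSegmentStart_lt hk2
  by_contra! hnone
  have ha_const : ∀ t ∈ Icc s k, a t = a s :=
    eq_of_forall_mem_Ioc_eq_pred fun j hj => by
      obtain ⟨hsj, hjk⟩ := mem_Ioc.mp hj
      by_contra hne
      exact (hnone j (mem_filter.mpr ⟨mem_Icc.mpr ⟨by omega, by omega⟩, hne⟩) hsj).not_ge hjk
  have ha_covers : ∀ t ∈ Icc s k, t ∈ vis (a s) := fun t ht => by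
    obtain ⟨hst, htk⟩ := mem_Icc.mp ht
    rw [← ha_const t ht]
    exact havalid t (mem_Icc.mpr ⟨by omega, by omega⟩)
  have hg_covers := hlongest s (mem_Icc.mpr ⟨hs1, by omega⟩)
    (lastSegmentStart_eq_one_or_ne_pred hk2) (a s) k hsk.le ha_covers k
    (mem_Icc.mpr ⟨hsk.le, le_rfl⟩)
  rw [← apply_pred_eq_apply_lastSegmentStart (g := g) hk2] at hg_covers
  exact hgk (hkeep k hk hg_covers)

theorem greedy_assignment_optimal_general (T : ℕ) (vis : ℕ → Finset ℕ)
    (g : ℕ → ℕ)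
    (hkeep : ∀ k ∈ Finset.Icc 2 T, k ∈ vis (g (k - 1)) → g k = g (k - 1))
    (hlongest : ∀ k ∈ Finset.Icc 1 T, (k = 1 ∨ g k ≠ g (k - 1)) →
      ∀ c k', k ≤ k' → (∀ t ∈ Finset.Icc k k', t ∈ vis c) →
      ∀ t ∈ Finset.Icc k k', t ∈ vis (g k))
    (a : ℕ → ℕ)
    (havalid : ∀ k ∈ Finset.Icc 1 T, k ∈ vis (a k)) :
    Switches T g ≤ Switches T a :=
  card_le_card_of_forall_exists_mem_Ioc (lastSegmentStart g)
    (fun _ hk _ _ hlt => le_lastSegmentStart hlt (mem_filter.mp hk).2)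
    (fun _ hk => exists_switch_mem_Ioc_lastSegmentStart hkeep hlongest havalid
      (mem_filter.mp hk).1 (mem_filter.mp hk).2)

/-- Optimality of the greedy anchor assignment (Theorem 2 of the paper):
    with time slots `1..T`, clusters `c` with visibility sets `vis c` that are
    intervals, any greedy assignment `g` — valid, keeping the current cluster
    while it remains visible, and upon a forced switch (or initially) picking a
    cluster remaining visible for the longest time — has no more switches than
    any other valid assignment `a`. -/
theorem greedy_assignment_optimal (T : ℕ) (vis : ℕ → Finset ℕ)
    (hinterval : ∀ c k₁ k₂ k₃, k₁ ≤ k₂ → k₂ ≤ k₃ →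
      k₁ ∈ vis c → k₃ ∈ vis c → k₂ ∈ vis c)
    (g : ℕ → ℕ)
    (hgvalid : ∀ k ∈ Finset.Icc 1 T, k ∈ vis (g k))
    (hkeep : ∀ k ∈ Finset.Icc 2 T, k ∈ vis (g (k - 1)) → g k = g (k - 1))
    (hlongest : ∀ k ∈ Finset.Icc 1 T, (k = 1 ∨ g k ≠ g (k - 1)) →
      ∀ c k', k ≤ k' → (∀ t ∈ Finset.Icc k k', t ∈ vis c) →
      ∀ t ∈ Finset.Icc k k', t ∈ vis (g k))
    (a : ℕ → ℕ)
    (havalid : ∀ k ∈ Finset.Icc 1 T, k ∈ vis (a k)) :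
    Switches T g ≤ Switches T a :=
  greedy_assignment_optimal_general T vis g hkeep hlongest a havalid
end

section
/- Every partition of the torus ℤ_X × ℤ_Y into clusters each contained in some L1-ball of radius r (2r+1 ≤ min(X,Y)) requires at least ⌈XY / (2r²+2r+1)⌉ clusters. -/
/-- Cyclic hop distance on a ring of `X` nodes. -/
def cyc (X a b : ℕ) : ℕ := min ((a + X - b) % X) ((b + X - a) % X)

/-- L1 torus hop distance on `ℤ_X × ℤ_Y`. -/
def torusD (X Y : ℕ) (p q : Fin X × Fin Y) : ℕ := cyc X p.1 q.1 + cyc Y p.2 q.2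

/-!
Fix an anchor `A`. Lifting each coordinate of `s - A` to its representative of least absolute
value (`ZMod.valMinAbs`) is injective and turns `torusD X Y A s` into the `L1` norm of the lift,
so a torus ball of radius `r` embeds into the `L1` ball of radius `r` in `ℤ²`, which has
`2r² + 2r + 1` points. Covering the `XY` points of the torus by `#P` such balls gives
`XY ≤ #P (2r² + 2r + 1)`.
-/

open Finset

lemma mod_add_sub_eq_ite {X a b : ℕ} (ha : a < X) (hb : b < X) :
    (b + X - a) % X = if a ≤ b then b - a else b + X - a := by
  split_ifs
  · rw [show b + X - a = X + (b - a) by omega, Nat.add_mod_left, Nat.mod_eq_of_lt (by omega)]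
  · exact Nat.mod_eq_of_lt (by omega)

lemma cyc_eq_natAbs_valMinAbs {X a b : ℕ} [NeZero X] (ha : a < X) (hb : b < X) :
    cyc X a b = ((b - a : ZMod X)).valMinAbs.natAbs := by
  have hval : ((b - a : ZMod X)).val = (b + X - a) % X := by
    rw [← ZMod.val_natCast, Nat.cast_sub (by omega), Nat.cast_add, ZMod.natCast_self, add_zero]
  rw [ZMod.valMinAbs_natAbs_eq_min, hval, cyc, mod_add_sub_eq_ite ha hb, mod_add_sub_eq_ite hb ha]
  split_ifs <;> omega

def cycOffset {X : ℕ} (a b : Fin X) : ℤ := ((b - a : ZMod X)).valMinAbs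

lemma natAbs_cycOffset {X : ℕ} (a b : Fin X) : (cycOffset a b).natAbs = cyc X a b :=
  have : NeZero X := ⟨a.pos.ne'⟩
  (cyc_eq_natAbs_valMinAbs a.isLt b.isLt).symm

lemma cycOffset_injective {X : ℕ} (a : Fin X) : Function.Injective (cycOffset a) := by
  intro b b' h
  have : NeZero X := ⟨a.pos.ne'⟩
  have hcast : ((b : ℕ) : ZMod X) = ((b' : ℕ) : ZMod X) :=
    sub_left_injective (ZMod.injective_valMinAbs h)
  have := congrArg ZMod.val hcast
  rw [ZMod.val_natCast_of_lt b.isLt, ZMod.val_natCast_of_lt b'.isLt] at this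
  exact Fin.ext this

noncomputable def l1Ball (r : ℕ) : Finset (ℤ × ℤ) :=
  ((Icc (-r : ℤ) r).sigma fun u => Icc ((u.natAbs : ℤ) - r) (r - u.natAbs)).map
    (Equiv.sigmaEquivProd ℤ ℤ).toEmbedding

lemma mem_l1Ball {r : ℕ} {p : ℤ × ℤ} : p ∈ l1Ball r ↔ p.1.natAbs + p.2.natAbs ≤ r := by
  rw [l1Ball, mem_map_equiv]
  simp only [Equiv.sigmaEquivProd_symm_apply, mem_sigma, mem_Icc]
  omega

lemma sum_Icc_two_mul_sub_natAbs_add_one (r : ℕ) :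
    ∑ u ∈ Icc (-r : ℤ) r, (2 * ((r : ℤ) - u.natAbs) + 1) = 2 * r ^ 2 + 2 * r + 1 := by
  induction r with
  | zero => simp
  | succ r ih =>
    have hIcc : Icc (-(r + 1 : ℕ) : ℤ) (r + 1 : ℕ) =
        insert (-(r + 1 : ℕ) : ℤ) (insert ((r + 1 : ℕ) : ℤ) (Icc (-r : ℤ) r)) := by
      ext; simp only [mem_Icc, mem_insert]; omega
    have hshift : ∀ u : ℤ, 2 * (((r + 1 : ℕ) : ℤ) - u.natAbs) + 1 =
        (2 * ((r : ℤ) - u.natAbs) + 1) + 2 := fun u => by push_cast; ring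
    rw [hIcc, sum_insert (by simp only [mem_insert, mem_Icc]; omega), sum_insert (by simp),
      sum_congr rfl fun u _ => hshift u, sum_add_distrib, ih, sum_const, Int.card_Icc,
      Int.natAbs_neg, Int.natAbs_natCast, nsmul_eq_mul,
      show ((r : ℤ) + 1 - -r).toNat = 2 * r + 1 by omega]
    push_cast
    ring

lemma card_l1Ball (r : ℕ) : (l1Ball r).card = 2 * r ^ 2 + 2 * r + 1 := by
  zify
  rw [l1Ball, card_map, card_sigma, Nat.cast_sum, ← sum_Icc_two_mul_sub_natAbs_add_one]
  refine sum_congr rfl fun u hu => ?_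
  rw [mem_Icc] at hu
  rw [Int.card_Icc, Int.toNat_of_nonneg (by omega)]
  ring

lemma card_le_of_forall_torusD_le {X Y r : ℕ} (C : Finset (Fin X × Fin Y)) (A : Fin X × Fin Y)
    (hA : ∀ s ∈ C, torusD X Y A s ≤ r) : C.card ≤ 2 * r ^ 2 + 2 * r + 1 := by
  rw [← card_l1Ball r]
  refine card_le_card_of_injOn (fun s => (cycOffset A.1 s.1, cycOffset A.2 s.2)) ?_ ?_
  · intro s hs
    simpa [mem_l1Ball, natAbs_cycOffset, torusD] using hA s hs
  · intro s _ t _ hst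
    simp only [Prod.mk.injEq] at hst
    exact Prod.ext (cycOffset_injective _ hst.1) (cycOffset_injective _ hst.2)

theorem cluster_partition_lower_bound_general (X Y r : ℕ)
    (P : Finset (Finset (Fin X × Fin Y)))
    (hunion : P.sup id = Finset.univ)
    (hball : ∀ C ∈ P, ∃ A : Fin X × Fin Y, ∀ s ∈ C, torusD X Y A s ≤ r) :
    ⌈(X * Y : ℚ) / (2 * r ^ 2 + 2 * r + 1)⌉ ≤ P.card := by
  have hcover : X * Y ≤ P.card * (2 * r ^ 2 + 2 * r + 1) := by
    calc X * Y = (P.biUnion id).card := by rw [← sup_eq_biUnion, hunion]; simp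
      _ ≤ P.card * (2 * r ^ 2 + 2 * r + 1) := card_biUnion_le_card_mul P id _ fun C hC =>
          let ⟨A, hA⟩ := hball C hC; card_le_of_forall_torusD_le C A hA
  rw [Int.ceil_le, div_le_iff₀ (by positivity)]
  exact_mod_cast hcover

/-- Every partition of the torus `ℤ_X × ℤ_Y` into clusters, each contained in
    some L1-ball of radius `r` (with `2r+1 ≤ min(X,Y)`), requires at least
    `⌈XY / (2r²+2r+1)⌉` clusters. -/
theorem cluster_partition_lower_bound (X Y r : ℕ) (h : 2 * r + 1 ≤ min X Y)
    (P : Finset (Finset (Fin X × Fin Y)))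
    (hdisj : (P : Set (Finset (Fin X × Fin Y))).PairwiseDisjoint id)
    (hunion : P.sup id = Finset.univ)
    (hball : ∀ C ∈ P, ∃ A : Fin X × Fin Y, ∀ s ∈ C, torusD X Y A s ≤ r) :
    ⌈(X * Y : ℚ) / (2 * r ^ 2 + 2 * r + 1)⌉ ≤ P.card :=
  cluster_partition_lower_bound_general X Y r P hunion hball
end
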